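/- Let A, B ∈ M₂(ℂ) and suppose W_{A⊕0}(B⊕0) = W_A(B) (3×3 case). Then W_B(A₀) = W_{B⊕0}(A₀⊕0), where A₀ = A − (tr A / 2)·I. -/

import Mathlib

open Matrix

/-- The classical numerical range of an m×m complex matrix. -/
noncomputable def NR {m : ℕ} (A : Matrix (Fin m) (Fin m) ℂ) : Set ℂ :=
  {z | ∃ x : EuclideanSpace ℂ (Fin m), ‖x‖ = 1 ∧ z = star (x : Fin m → ℂ) ⬝ᵥ A.mulVec x}

/-- The C-numerical range W_C(B) = {tr (C U* B U) : U unitary}. -/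
noncomputable def CNR {m : ℕ} (C B : Matrix (Fin m) (Fin m) ℂ) : Set ℂ :=
  {z | ∃ U : Matrix.unitaryGroup (Fin m) ℂ,
    z = (C * star (U : Matrix (Fin m) (Fin m) ℂ) * B * (U : Matrix (Fin m) (Fin m) ℂ)).trace}

/-- A ⊕ 0_{n-2} : the n×n matrix with A in the top-left 2×2 block and zeros elsewhere. -/
def embed (n : ℕ) (A : Matrix (Fin 2) (Fin 2) ℂ) : Matrix (Fin n) (Fin n) ℂ :=
  fun i j => if hi : (i : ℕ) < 2 then if hj : (j : ℕ) < 2 then A ⟨i, hi⟩ ⟨j, hj⟩ else 0 else 0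

/-- The numerical radius. -/
noncomputable def nrad {m : ℕ} (A : Matrix (Fin m) (Fin m) ℂ) : ℝ :=
  sSup ((fun z : ℂ => ‖z‖) '' NR A)

/-- A(ε) = diag(1,ε) A diag(1,ε). -/
noncomputable def Aeps (ε : ℝ) (A : Matrix (Fin 2) (Fin 2) ℂ) : Matrix (Fin 2) (Fin 2) ℂ :=
  Matrix.diagonal ![1, (ε : ℂ)] * A * Matrix.diagonal ![1, (ε : ℂ)]

/-- The unitary orbit U(A) = {V A V* : V unitary}. -/
def orbit (A : Matrix (Fin 2) (Fin 2) ℂ) : Set (Matrix (Fin 2) (Fin 2) ℂ) :=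
  {X | ∃ V : Matrix.unitaryGroup (Fin 2) ℂ,
    X = (V : Matrix (Fin 2) (Fin 2) ℂ) * A * star (V : Matrix (Fin 2) (Fin 2) ℂ)}

/-!
Write `A = A₀ + c • 1` with `c = tr A / 2`, and for `U ∈ U(3)` let `X` be the top-left `2 × 2`
block and `w` the last diagonal entry of `U* (B ⊕ 0) U`. Then `tr ((A ⊕ 0) U* (B ⊕ 0) U) = tr (A X)`
and `tr X = tr B - w`, so the hypothesis and `W_{A₀ + c • 1}(B) = W_{A₀}(B) + c tr B` give
`tr (A₀ X) - c w ∈ W_{A₀}(B)`. The traceless `A₀` is unitarily similar to `-A₀`: its Pauli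
coordinates define a real-linear map `ℝ³ → ℂ`, and a unit vector `h` in the kernel gives a hermitian
unitary `∑ hₖ σₖ` anticommuting with `A₀`. Replacing `U` by `U (S ⊕ 1)` for such an `S` yields
`tr (A₀ X) + c w ∈ W_{A₀}(B)`, so the midpoint `tr ((A₀ ⊕ 0) U* (B ⊕ 0) U) = tr (A₀ X)` lies in
`W_{A₀}(B)` because that set is convex. Together with `W_C(D) = W_D(C)` this is the claim.

Convexity: after a unitary change of basis a traceless `C` is `[[l, s], [0, -l]]`, and `W_C(D)` is
the union, over unit vectors `x`, of the circles with centre `l (2 ⟨x, D x⟩ - tr D)` and radius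
`|s| |⟨x⊥, D x⟩|`. Every enclosed disc lies in `W_C(D)` as well, since the radius vanishes at an
eigenvector of `D` and the unit sphere is connected. In the Bloch coordinates `p ∈ S²` of `x` the
centre is real-linear in `p`, and the squared radius is an affine function of `p` minus the squared
norm of an affine function. From a convex combination of two Bloch vectors, move along the kernel of
the centre map, in the direction in which the affine part does not decrease, until the sphere is
reached: the circle there has the convex combination of the two centres as centre and a radius at
least the convex combination of the two radii.
-/

section ComplexVectors

variable {n : Type*} [Fintype n]

lemma trace_star_mul_mul_of_mem_unitaryGroup [DecidableEq n] {U : Matrix n n ℂ}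
    (hU : U ∈ unitaryGroup n ℂ) (D : Matrix n n ℂ) : (star U * D * U).trace = D.trace := by
  rw [trace_mul_cycle, mem_unitaryGroup_iff.mp hU, Matrix.one_mul]

lemma star_dotProduct_mulVec_eq_conj_apply (U D : Matrix n n ℂ) (i j : n) :
    star (Uᵀ i) ⬝ᵥ D *ᵥ Uᵀ j = (star U * D * U) i j := by
  simp only [Matrix.mul_apply, dotProduct, mulVec, Finset.sum_mul, Finset.mul_sum, star_apply,
    transpose_apply, Pi.star_apply, mul_assoc]
  exact Finset.sum_comm

lemma star_dotProduct_of_mem_unitaryGroup [DecidableEq n] {U : Matrix n n ℂ}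
    (hU : U ∈ unitaryGroup n ℂ) (i j : n) : star (Uᵀ i) ⬝ᵥ Uᵀ j = (1 : Matrix n n ℂ) i j := by
  rw [← one_mulVec (Uᵀ j), star_dotProduct_mulVec_eq_conj_apply, Matrix.mul_one,
    mem_unitaryGroup_iff'.mp hU]

lemma star_dotProduct_self_eq_norm_sq (x : n → ℂ) :
    star x ⬝ᵥ x = ((‖WithLp.toLp 2 x‖ ^ 2 : ℝ) : ℂ) := by
  have h := inner_self_eq_norm_sq_to_K (𝕜 := ℂ) (WithLp.toLp 2 x)
  rw [EuclideanSpace.inner_eq_star_dotProduct, dotProduct_comm] at h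
  exact_mod_cast h

lemma isPreconnected_unitSphere [Nonempty n] :
    IsPreconnected {x : n → ℂ | star x ⬝ᵥ x = 1} := by
  have hrank : 1 < Module.rank ℝ (EuclideanSpace ℂ n) := by
    rw [← Module.finrank_eq_rank, ← Module.finrank_mul_finrank ℝ ℂ, Complex.finrank_real_complex,
      finrank_euclideanSpace]
    have := Fintype.card_pos (α := n)
    norm_cast
    omega
  convert (isPreconnected_sphere hrank (0 : EuclideanSpace ℂ n) 1).image _
    (PiLp.continuous_ofLp 2 _).continuousOn
  ext x
  simp only [Set.mem_ofPred_eq, Set.mem_image, mem_sphere_zero_iff_norm,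
    star_dotProduct_self_eq_norm_sq]
  constructor
  · intro h
    refine ⟨WithLp.toLp 2 x, ?_, rfl⟩
    exact (pow_eq_one_iff_of_nonneg (norm_nonneg _) two_ne_zero).mp (by exact_mod_cast h)
  · rintro ⟨y, hy, rfl⟩
    simp [hy]

lemma exists_norm_eq_one_mul_eq {a b : ℂ} (h : ‖a‖ = ‖b‖) : ∃ c : ℂ, ‖c‖ = 1 ∧ a = c * b := by
  rcases eq_or_ne b 0 with rfl | hb
  · exact ⟨1, norm_one, by simpa using h⟩
  · refine ⟨a / b, ?_, (div_mul_cancel₀ a hb).symm⟩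
    rw [norm_div, h, div_self (norm_ne_zero_iff.mpr hb)]

lemma star_smul_dotProduct_smul (c : ℂ) (v : n → ℂ) :
    star (c • v) ⬝ᵥ (c • v) = ((‖c‖ ^ 2 : ℝ) : ℂ) * (star v ⬝ᵥ v) := by
  rw [star_smul, smul_dotProduct, dotProduct_smul, smul_smul, smul_eq_mul, Complex.star_def,
    Complex.conj_mul']
  push_cast; rfl

lemma exists_smul_star_dotProduct_self_eq_one {x : n → ℂ} (hx : x ≠ 0) :
    ∃ c : ℂ, star (c • x) ⬝ᵥ (c • x) = 1 := by
  have hx' : ‖WithLp.toLp 2 x‖ ≠ 0 := by simpa using hx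
  refine ⟨(‖WithLp.toLp 2 x‖⁻¹ : ℝ), ?_⟩
  rw [star_dotProduct_self_eq_norm_sq, WithLp.toLp_smul, norm_smul]
  simp [hx']

lemma exists_unit_eigenvector [DecidableEq n] [Nonempty n] (D : Matrix n n ℂ) :
    ∃ (u : n → ℂ) (μ : ℂ), star u ⬝ᵥ u = 1 ∧ D *ᵥ u = μ • u := by
  obtain ⟨μ, hμ⟩ := Module.End.exists_eigenvalue (toLin' D)
  obtain ⟨v, hv⟩ := hμ.exists_hasEigenvector
  obtain ⟨c, hc⟩ := exists_smul_star_dotProduct_self_eq_one hv.2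
  refine ⟨c • v, μ, hc, ?_⟩
  rw [mulVec_smul, ← toLin'_apply, hv.apply_eq_smul, smul_comm]

lemma transpose_of_mem_unitaryGroup_of_orthonormal [DecidableEq n] {v : n → n → ℂ}
    (hv : ∀ i j, star (v i) ⬝ᵥ v j = (1 : Matrix n n ℂ) i j) :
    (of v)ᵀ ∈ unitaryGroup n ℂ := by
  rw [mem_unitaryGroup_iff']
  ext i j
  rw [← hv, ← Matrix.mul_one (star (of v)ᵀ), ← star_dotProduct_mulVec_eq_conj_apply, one_mulVec]
  rfl

end ComplexVectors

section CNR

variable {m : ℕ}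

lemma mem_CNR_iff {C D : Matrix (Fin m) (Fin m) ℂ} {z : ℂ} :
    z ∈ CNR C D ↔ ∃ U ∈ unitaryGroup (Fin m) ℂ, z = (C * (star U * D * U)).trace := by
  simp only [CNR, Set.mem_ofPred_eq, Matrix.mul_assoc]
  exact ⟨fun ⟨U, hU⟩ => ⟨U, U.2, hU⟩, fun ⟨U, hU, h⟩ => ⟨⟨U, hU⟩, h⟩⟩

lemma CNR_comm (C D : Matrix (Fin m) (Fin m) ℂ) : CNR C D = CNR D C := by
  suffices ∀ C D : Matrix (Fin m) (Fin m) ℂ, CNR C D ⊆ CNR D C from (this C D).antisymm (this D C)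
  intro C D z hz
  obtain ⟨U, hU, rfl⟩ := mem_CNR_iff.mp hz
  refine mem_CNR_iff.mpr ⟨star U, Unitary.star_mem hU, ?_⟩
  calc (C * (star U * D * U)).trace = ((C * star U * D) * U).trace := by
        simp only [Matrix.mul_assoc]
    _ = (U * (C * star U * D)).trace := trace_mul_comm _ _
    _ = ((U * C * star U) * D).trace := by simp only [Matrix.mul_assoc]
    _ = (D * (star (star U) * C * star U)).trace := by rw [trace_mul_comm, star_star]

lemma CNR_subset_CNR_star_mul_mul {Q : Matrix (Fin m) (Fin m) ℂ}
    (hQ : Q ∈ unitaryGroup (Fin m) ℂ) (C D : Matrix (Fin m) (Fin m) ℂ) :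
    CNR C D ⊆ CNR (star Q * C * Q) D := by
  intro z hz
  obtain ⟨U, hU, rfl⟩ := mem_CNR_iff.mp hz
  refine mem_CNR_iff.mpr ⟨U * Q, Submonoid.mul_mem _ hU hQ, ?_⟩
  rw [← trace_star_mul_mul_of_mem_unitaryGroup hQ, star_mul]
  simp only [Matrix.mul_assoc]
  rw [← Matrix.mul_assoc Q (star Q), mem_unitaryGroup_iff.mp hQ, Matrix.one_mul]

lemma CNR_star_mul_mul {Q : Matrix (Fin m) (Fin m) ℂ} (hQ : Q ∈ unitaryGroup (Fin m) ℂ)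
    (C D : Matrix (Fin m) (Fin m) ℂ) : CNR (star Q * C * Q) D = CNR C D := by
  refine subset_antisymm ?_ (CNR_subset_CNR_star_mul_mul hQ C D)
  have hQQ : Q * star Q = 1 := mem_unitaryGroup_iff.mp hQ
  have e : star (star Q) * (star Q * C * Q) * star Q = C := by
    rw [star_star, ← Matrix.mul_assoc, ← Matrix.mul_assoc, hQQ, Matrix.one_mul, Matrix.mul_assoc,
      hQQ, Matrix.mul_one]
  simpa only [e] using CNR_subset_CNR_star_mul_mul (Unitary.star_mem hQ) (star Q * C * Q) D

lemma CNR_neg (C D : Matrix (Fin m) (Fin m) ℂ) : CNR (-C) D = -CNR C D := by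
  ext z
  simp only [Set.mem_neg, mem_CNR_iff, Matrix.neg_mul, trace_neg, neg_eq_iff_eq_neg]

lemma mem_CNR_add_smul_one_iff {C D : Matrix (Fin m) (Fin m) ℂ} {c z : ℂ} :
    z ∈ CNR (C + c • 1) D ↔ z - c * D.trace ∈ CNR C D := by
  simp only [mem_CNR_iff, Matrix.add_mul, trace_add, Matrix.smul_mul, Matrix.one_mul, trace_smul,
    smul_eq_mul]
  refine exists_congr fun U => and_congr_right fun hU => ?_
  rw [trace_star_mul_mul_of_mem_unitaryGroup hU, sub_eq_iff_eq_add]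

end CNR

section Perp

def perp (x : Fin 2 → ℂ) : Fin 2 → ℂ := ![-star (x 1), star (x 0)]

variable (x : Fin 2 → ℂ)

lemma star_dotProduct_perp : star x ⬝ᵥ perp x = 0 := by
  simp only [perp, vec2_dotProduct, Pi.star_apply, cons_val_zero, cons_val_one]; ring

lemma star_perp_dotProduct : star (perp x) ⬝ᵥ x = 0 := by
  simp only [perp, vec2_dotProduct, Pi.star_apply, cons_val_zero, cons_val_one, star_neg,
    star_star]; ring

lemma star_perp_dotProduct_perp : star (perp x) ⬝ᵥ perp x = star x ⬝ᵥ x := by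
  simp only [perp, vec2_dotProduct, Pi.star_apply, cons_val_zero, cons_val_one, star_neg,
    star_star]; ring

lemma eq_smul_perp_of_star_dotProduct_eq_zero {x y : Fin 2 → ℂ} (hx : star x ⬝ᵥ x = 1)
    (hxy : star x ⬝ᵥ y = 0) : y = (star (perp x) ⬝ᵥ y) • perp x := by
  simp only [perp, vec2_dotProduct, Pi.star_apply] at hx hxy ⊢
  ext i; fin_cases i <;> simp only [Fin.zero_eta, Fin.mk_one, cons_val_zero, cons_val_one,
    Pi.smul_apply, smul_eq_mul, star_neg, star_star]
  · linear_combination (-(y 0)) * hx + x 0 * hxy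
  · linear_combination (-(y 1)) * hx + x 1 * hxy

lemma norm_sq_add_norm_sq_perp {x : Fin 2 → ℂ} (hx : star x ⬝ᵥ x = 1) (v : Fin 2 → ℂ) :
    ‖star x ⬝ᵥ v‖ ^ 2 + ‖star (perp x) ⬝ᵥ v‖ ^ 2 = ‖WithLp.toLp 2 v‖ ^ 2 := by
  have h : star (star x ⬝ᵥ v) * (star x ⬝ᵥ v) + star (star (perp x) ⬝ᵥ v) * (star (perp x) ⬝ᵥ v)
      = star v ⬝ᵥ v := by
    simp only [perp, vec2_dotProduct, Pi.star_apply, cons_val_zero, cons_val_one, star_neg,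
      star_star, star_add, star_mul'] at hx ⊢
    linear_combination (star (v 0) * v 0 + star (v 1) * v 1) * hx
  rw [star_dotProduct_self_eq_norm_sq, Complex.star_def, Complex.conj_mul', Complex.conj_mul'] at h
  exact_mod_cast h

lemma transpose_of_pair_mem_unitaryGroup {x y : Fin 2 → ℂ} (hx : star x ⬝ᵥ x = 1)
    (hy : star y ⬝ᵥ y = 1) (hxy : star x ⬝ᵥ y = 0) : (of ![x, y])ᵀ ∈ unitaryGroup (Fin 2) ℂ := by
  have hyx : star y ⬝ᵥ x = 0 := by rw [star_dotProduct, hxy, star_zero]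
  refine transpose_of_mem_unitaryGroup_of_orthonormal fun i j => ?_
  fin_cases i <;> fin_cases j <;> simp only [Fin.zero_eta, Fin.mk_one, cons_val_zero,
    cons_val_one, one_apply_eq, one_apply_ne, ne_eq, zero_ne_one, one_ne_zero,
    not_false_eq_true] <;> assumption

end Perp

section Bloch

open Complex

/- With the Pauli matrices `σ₁, σ₂, σ₃`, write `D = (tr D / 2) • 1 + ∑ₖ dₖ σₖ`; then
`blochMap D p = ∑ₖ pₖ dₖ`, `blochVec x = (⟨x, σₖ x⟩)ₖ` is the Bloch vector of `x`, and below
`pauli h = ∑ₖ hₖ σₖ`. -/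
def blochVec (x : Fin 2 → ℂ) : Fin 3 → ℝ :=
  ![2 * (star (x 0) * x 1).re, 2 * (star (x 0) * x 1).im, normSq (x 0) - normSq (x 1)]

noncomputable def blochMap (D : Matrix (Fin 2) (Fin 2) ℂ) : (Fin 3 → ℝ) →ₗ[ℝ] ℂ :=
  Fintype.linearCombination ℝ ![(D 0 1 + D 1 0) / 2, I * (D 0 1 - D 1 0) / 2, (D 0 0 - D 1 1) / 2]

lemma blochMap_apply (D : Matrix (Fin 2) (Fin 2) ℂ) (p : Fin 3 → ℝ) :
    blochMap D p = p 0 * ((D 0 1 + D 1 0) / 2) + p 1 * (I * (D 0 1 - D 1 0) / 2)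
      + p 2 * ((D 0 0 - D 1 1) / 2) := by
  simp [blochMap, Fintype.linearCombination_apply, Fin.sum_univ_three, Complex.real_smul]

lemma star_dotProduct_mulVec_eq_bloch (D : Matrix (Fin 2) (Fin 2) ℂ) (x : Fin 2 → ℂ) :
    star x ⬝ᵥ D *ᵥ x = D.trace / 2 * (star x ⬝ᵥ x) + blochMap D (blochVec x) := by
  rw [blochMap_apply]
  simp only [blochVec, vec2_dotProduct, mulVec, trace_fin_two, Pi.star_apply, cons_val_zero,
    cons_val_one, cons_val_two]
  apply Complex.ext <;> simp [Complex.normSq_apply] <;> ring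

lemma blochVec_dotProduct_self (x : Fin 2 → ℂ) :
    ((blochVec x ⬝ᵥ blochVec x : ℝ) : ℂ) = (star x ⬝ᵥ x) ^ 2 := by
  simp only [blochVec, dotProduct, Fin.sum_univ_three, Pi.star_apply,
    cons_val_zero, cons_val_one, cons_val_two]
  apply Complex.ext <;> simp [Complex.normSq_apply, pow_two] <;> ring

lemma exists_blochVec_eq {p : Fin 3 → ℝ} (hp : p ⬝ᵥ p = 1) :
    ∃ x : Fin 2 → ℂ, star x ⬝ᵥ x = 1 ∧ blochVec x = p := by
  simp only [dotProduct, Fin.sum_univ_three] at hp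
  rcases lt_or_ge 0 (1 + p 2) with h | h
  · set r := √((1 + p 2) / 2)
    have hr : 0 < r := Real.sqrt_pos.mpr (by linarith)
    have hr2 : r ^ 2 = (1 + p 2) / 2 := Real.sq_sqrt (by linarith)
    refine ⟨![r, (p 0 + p 1 * I) / (2 * r)], ?_, ?_⟩
    · simp only [vec2_dotProduct, Pi.star_apply, cons_val_zero, cons_val_one]
      apply Complex.ext <;> simp [Complex.div_re, Complex.div_im, normSq_apply] <;> field_simp
      · linear_combination (4 * r ^ 2 + 2 * (1 + p 2) - 4) * hr2 + hp
      · ring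
    · ext k; fin_cases k <;> simp [blochVec, normSq_apply, Complex.div_re, Complex.div_im] <;>
        field_simp
      nlinarith
  · have h2 : p 2 = -1 := by nlinarith
    have h0 : p 0 = 0 := by nlinarith
    have h1 : p 1 = 0 := by nlinarith
    refine ⟨![0, 1], by rw [vec2_dotProduct]; simp, ?_⟩
    ext k; fin_cases k <;> simp [blochVec, h0, h1, h2]

end Bloch

section RealThreeSpace

lemma mul_add_mul_sq_le {a b : ℝ} (ha : 0 ≤ a) (hb : 0 ≤ b) (hab : a + b = 1) (x y : ℝ) :
    (a * x + b * y) ^ 2 ≤ a * x ^ 2 + b * y ^ 2 := by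
  nlinarith [mul_nonneg ha hb, sq_nonneg (x - y)]

lemma dotProduct_self_smul_add_smul_le {n : Type*} [Fintype n] {a b : ℝ} (ha : 0 ≤ a)
    (hb : 0 ≤ b) (hab : a + b = 1) (p q : n → ℝ) :
    (a • p + b • q) ⬝ᵥ (a • p + b • q) ≤ a * (p ⬝ᵥ p) + b * (q ⬝ᵥ q) := by
  simp only [dotProduct, Finset.mul_sum, ← Finset.sum_add_distrib]
  refine Finset.sum_le_sum fun i _ => ?_
  simpa [← sq] using mul_add_mul_sq_le ha hb hab (p i) (q i)

lemma dotProduct_self_pos {n : Type*} [Fintype n] {k : n → ℝ} (hk : k ≠ 0) : 0 < k ⬝ᵥ k :=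
  (Finset.sum_nonneg fun i _ => mul_self_nonneg (k i)).lt_of_ne
    (Ne.symm (dotProduct_self_eq_zero.not.mpr hk))

lemma exists_ne_zero_map_eq_zero (L : (Fin 3 → ℝ) →ₗ[ℝ] ℂ) : ∃ k ≠ 0, L k = 0 := by
  obtain ⟨k, hk, hk0⟩ := (Submodule.ne_bot_iff _).mp (L.ker_ne_bot_of_finrank_lt (by simp))
  exact ⟨k, hk0, hk⟩

lemma exists_dotProduct_self_eq_one_map_eq {p : Fin 3 → ℝ} (hp : p ⬝ᵥ p ≤ 1)
    (L : (Fin 3 → ℝ) →ₗ[ℝ] ℂ) (φ : (Fin 3 → ℝ) →ₗ[ℝ] ℝ) :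
    ∃ p', p' ⬝ᵥ p' = 1 ∧ L p' = L p ∧ φ p ≤ φ p' := by
  obtain ⟨k, hk, hLk, hφk⟩ : ∃ k ≠ 0, L k = 0 ∧ 0 ≤ φ k := by
    obtain ⟨k, hk, hLk⟩ := exists_ne_zero_map_eq_zero L
    rcases le_total 0 (φ k) with h | h
    · exact ⟨k, hk, hLk, h⟩
    · exact ⟨-k, neg_ne_zero.mpr hk, by simp [hLk], by simpa using h⟩
  have hpp : 0 ≤ p ⬝ᵥ p := Finset.sum_nonneg fun i _ => mul_self_nonneg (p i)
  have hkk := dotProduct_self_pos hk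
  set f : ℝ → ℝ := fun t => (p + t • k) ⬝ᵥ (p + t • k)
  have hf : ∀ t, f t = p ⬝ᵥ p + 2 * (p ⬝ᵥ k) * t + (k ⬝ᵥ k) * t ^ 2 := fun t => by
    simp only [f, dotProduct_add, add_dotProduct, dotProduct_smul, smul_dotProduct, smul_eq_mul,
      dotProduct_comm k p]
    ring
  set T := (2 * |p ⬝ᵥ k| + 1) / (k ⬝ᵥ k) + 1
  have h1T : 1 ≤ T := le_add_of_nonneg_left (by positivity)
  have hT : 1 ≤ f T := by
    have hcT : 2 * |p ⬝ᵥ k| + 1 ≤ (k ⬝ᵥ k) * T := by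
      rw [mul_add, mul_div_cancel₀ _ hkk.ne']; linarith
    rw [hf]
    nlinarith [neg_abs_le (p ⬝ᵥ k)]
  obtain ⟨t, ht, hft⟩ := intermediate_value_Icc (by linarith : (0 : ℝ) ≤ T)
    (by fun_prop : Continuous f).continuousOn ⟨by simpa [f] using hp, hT⟩
  refine ⟨p + t • k, hft, by simp [hLk], ?_⟩
  simpa using mul_nonneg ht.1 hφk

end RealThreeSpace

open Complex in
def pauli (h : Fin 3 → ℝ) : Matrix (Fin 2) (Fin 2) ℂ :=
  !![(h 2 : ℂ), h 0 - I * h 1; h 0 + I * h 1, -h 2]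

lemma star_pauli (h : Fin 3 → ℝ) : star (pauli h) = pauli h := by
  ext i j; fin_cases i <;> fin_cases j <;> simp [pauli, star_apply, sub_eq_add_neg]

lemma pauli_mul_self (h : Fin 3 → ℝ) : pauli h * pauli h = ((h ⬝ᵥ h : ℝ) : ℂ) • 1 := by
  rw [pauli, mul_fin_two]
  ext i j; fin_cases i <;> fin_cases j <;> simp [dotProduct, Fin.sum_univ_three] <;>
    ring_nf <;> simp

lemma pauli_mul_add_mul_pauli (h : Fin 3 → ℝ) (C : Matrix (Fin 2) (Fin 2) ℂ) :
    pauli h * C + C * pauli h = C.trace • pauli h + (2 * blochMap C h) • 1 := by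
  rw [blochMap_apply, trace_fin_two, eta_fin_two C, pauli, mul_fin_two, mul_fin_two]
  ext i j; fin_cases i <;> fin_cases j <;> simp <;> ring

lemma exists_unitary_star_mul_mul_eq_neg {C : Matrix (Fin 2) (Fin 2) ℂ} (hC : C.trace = 0) :
    ∃ S ∈ unitaryGroup (Fin 2) ℂ, star S * C * S = -C := by
  obtain ⟨k, hk, hCk⟩ := exists_ne_zero_map_eq_zero (blochMap C)
  have hkk := dotProduct_self_pos hk
  obtain ⟨c, hcc⟩ : ∃ c : ℂ, star c * c * ((k ⬝ᵥ k : ℝ) : ℂ) = 1 := by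
    refine ⟨((√(k ⬝ᵥ k))⁻¹ : ℝ), ?_⟩
    rw [Complex.star_def, Complex.conj_ofReal]
    exact_mod_cast by rw [← mul_inv, Real.mul_self_sqrt hkk.le, inv_mul_cancel₀ hkk.ne']
  have hanti : pauli k * C = -(C * pauli k) := by
    simpa [hC, hCk, eq_neg_iff_add_eq_zero] using pauli_mul_add_mul_pauli k C
  refine ⟨c • pauli k, ?_, ?_⟩
  · rw [mem_unitaryGroup_iff', star_smul, star_pauli, smul_mul_smul_comm, pauli_mul_self,
      smul_smul, hcc, one_smul]
  · calc star (c • pauli k) * C * (c • pauli k)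
        = (star c * c) • (pauli k * C * pauli k) := by
          rw [star_smul, star_pauli, smul_mul_assoc, smul_mul_assoc, mul_smul_comm, smul_smul]
      _ = -C := by
          rw [hanti, Matrix.neg_mul, Matrix.mul_assoc, pauli_mul_self, Matrix.mul_smul,
            Matrix.mul_one, smul_neg, smul_smul, hcc, one_smul]

section Triangular

variable (l s : ℂ) (D : Matrix (Fin 2) (Fin 2) ℂ)

noncomputable def offDiag (x : Fin 2 → ℂ) : ℂ := star (perp x) ⬝ᵥ D *ᵥ x

noncomputable def circleCenter (x : Fin 2 → ℂ) : ℂ := l * (2 * (star x ⬝ᵥ D *ᵥ x) - D.trace)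

noncomputable def circleRadius (x : Fin 2 → ℂ) : ℝ := ‖s‖ * ‖offDiag D x‖

lemma trace_triangular_mul_conj {U : Matrix (Fin 2) (Fin 2) ℂ} (hU : U ∈ unitaryGroup (Fin 2) ℂ) :
    (!![l, s; 0, -l] * (star U * D * U)).trace
      = circleCenter l D (Uᵀ 0) + s * (star (Uᵀ 1) ⬝ᵥ D *ᵥ Uᵀ 0) := by
  rw [circleCenter, star_dotProduct_mulVec_eq_conj_apply, star_dotProduct_mulVec_eq_conj_apply,
    ← trace_star_mul_mul_of_mem_unitaryGroup hU D]
  generalize star U * D * U = Y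
  rw [eta_fin_two Y]
  simp [trace_fin_two]
  ring

lemma mem_CNR_triangular_iff {z : ℂ} :
    z ∈ CNR !![l, s; 0, -l] D ↔
      ∃ x, star x ⬝ᵥ x = 1 ∧ ‖z - circleCenter l D x‖ = circleRadius s D x := by
  rw [mem_CNR_iff]
  constructor
  · rintro ⟨U, hU, rfl⟩
    have hx := star_dotProduct_of_mem_unitaryGroup hU 0 0
    have hy := star_dotProduct_of_mem_unitaryGroup hU 1 1
    have hxy := star_dotProduct_of_mem_unitaryGroup hU 0 1
    simp only [one_apply_eq, one_apply_ne zero_ne_one] at hx hy hxy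
    set c := star (perp (Uᵀ 0)) ⬝ᵥ Uᵀ 1
    have hyc : Uᵀ 1 = c • perp (Uᵀ 0) := eq_smul_perp_of_star_dotProduct_eq_zero hx hxy
    have hc : ‖c‖ = 1 := by
      rw [hyc, star_smul_dotProduct_smul, star_perp_dotProduct_perp, hx, mul_one] at hy
      exact (pow_eq_one_iff_of_nonneg (norm_nonneg _) two_ne_zero).mp (by exact_mod_cast hy)
    refine ⟨Uᵀ 0, hx, ?_⟩
    rw [trace_triangular_mul_conj l s D hU, add_sub_cancel_left, hyc, star_smul, smul_dotProduct,
      circleRadius, offDiag]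
    simp [hc]
  · rintro ⟨x, hx, hz⟩
    obtain ⟨c, hc, hzc⟩ := exists_norm_eq_one_mul_eq (b := s * offDiag D x)
      (by rw [hz, circleRadius, norm_mul])
    set y := star c • perp x
    have hy : star y ⬝ᵥ y = 1 := by
      rw [star_smul_dotProduct_smul, star_perp_dotProduct_perp, hx, norm_star, hc]; simp
    have hxy : star x ⬝ᵥ y = 0 := by
      rw [dotProduct_smul, star_dotProduct_perp, smul_zero]
    refine ⟨_, transpose_of_pair_mem_unitaryGroup hx hy hxy, ?_⟩
    rw [trace_triangular_mul_conj l s D (transpose_of_pair_mem_unitaryGroup hx hy hxy)]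
    show z = circleCenter l D x + s * (star y ⬝ᵥ D *ᵥ x)
    simp only [y, star_smul, star_star, smul_dotProduct, smul_eq_mul]
    rw [offDiag] at hzc
    linear_combination hzc

lemma mem_CNR_triangular_of_norm_sub_le {x₀ : Fin 2 → ℂ} (hx₀ : star x₀ ⬝ᵥ x₀ = 1) {z : ℂ}
    (h : ‖z - circleCenter l D x₀‖ ≤ circleRadius s D x₀) : z ∈ CNR !![l, s; 0, -l] D := by
  obtain ⟨u, μ, hu, hDu⟩ := exists_unit_eigenvector D
  have hu₀ : circleRadius s D u = 0 := by
    rw [circleRadius, offDiag, hDu, dotProduct_smul, star_perp_dotProduct, smul_zero, norm_zero,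
      mul_zero]
  set g : (Fin 2 → ℂ) → ℝ := fun x => ‖z - circleCenter l D x‖ - circleRadius s D x
  have hg : Continuous g := by
    simp only [g, circleCenter, circleRadius, offDiag, perp]
    fun_prop
  obtain ⟨x, hx, hgx⟩ := isPreconnected_unitSphere.intermediate_value hx₀ hu hg.continuousOn
    ⟨sub_nonpos.mpr h, by simp only [g, hu₀, sub_zero]; exact norm_nonneg _⟩
  exact (mem_CNR_triangular_iff l s D).mpr ⟨x, hx, by simpa [g, sub_eq_zero] using hgx⟩

lemma circleCenter_eq_bloch {x : Fin 2 → ℂ} (hx : star x ⬝ᵥ x = 1) :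
    circleCenter l D x = 2 * l * blochMap D (blochVec x) := by
  rw [circleCenter, star_dotProduct_mulVec_eq_bloch, hx]
  ring

lemma norm_offDiag_sq_eq_bloch {x : Fin 2 → ℂ} (hx : star x ⬝ᵥ x = 1) :
    ‖offDiag D x‖ ^ 2 = ((star D * D).trace / 2).re + (blochMap (star D * D) (blochVec x)).re
      - ‖D.trace / 2 + blochMap D (blochVec x)‖ ^ 2 := by
  have h := norm_sq_add_norm_sq_perp hx (D *ᵥ x)
  have hDx : star (D *ᵥ x) ⬝ᵥ D *ᵥ x = star x ⬝ᵥ (star D * D) *ᵥ x := by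
    rw [star_mulVec, ← dotProduct_mulVec, mulVec_mulVec, star_eq_conjTranspose]
  have hD := star_dotProduct_mulVec_eq_bloch D x
  have hDD := star_dotProduct_mulVec_eq_bloch (star D * D) x
  rw [hx, mul_one] at hD hDD
  rw [← hD, ← Complex.add_re, ← hDD, ← hDx, star_dotProduct_self_eq_norm_sq, Complex.ofReal_re,
    offDiag]
  linarith

lemma mul_norm_offDiag_add_mul_norm_offDiag_le {x₁ x₂ x : Fin 2 → ℂ}
    (hx₁ : star x₁ ⬝ᵥ x₁ = 1) (hx₂ : star x₂ ⬝ᵥ x₂ = 1) (hx : star x ⬝ᵥ x = 1) {a b : ℝ}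
    (ha : 0 ≤ a) (hb : 0 ≤ b) (hab : a + b = 1)
    (hL : blochMap D (blochVec x) = blochMap D (a • blochVec x₁ + b • blochVec x₂))
    (hφ : a * (blochMap (star D * D) (blochVec x₁)).re
      + b * (blochMap (star D * D) (blochVec x₂)).re ≤ (blochMap (star D * D) (blochVec x)).re) :
    a * ‖offDiag D x₁‖ + b * ‖offDiag D x₂‖ ≤ ‖offDiag D x‖ := by
  set w₁ := D.trace / 2 + blochMap D (blochVec x₁)
  set w₂ := D.trace / 2 + blochMap D (blochVec x₂)
  have hw : D.trace / 2 + blochMap D (blochVec x) = (a : ℂ) * w₁ + (b : ℂ) * w₂ := by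
    have hab' : (a : ℂ) + b = 1 := by exact_mod_cast hab
    rw [hL, map_add, map_smul, map_smul, Complex.real_smul, Complex.real_smul]
    linear_combination (-(D.trace / 2)) * hab'
  have hw_le : ‖(a : ℂ) * w₁ + (b : ℂ) * w₂‖ ^ 2 ≤ a * ‖w₁‖ ^ 2 + b * ‖w₂‖ ^ 2 := by
    refine le_trans (pow_le_pow_left₀ (norm_nonneg _) ((norm_add_le _ _).trans_eq ?_) 2)
      (mul_add_mul_sq_le ha hb hab _ _)
    simp [abs_of_nonneg ha, abs_of_nonneg hb]
  have h₁ := norm_offDiag_sq_eq_bloch D hx₁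
  have h₂ := norm_offDiag_sq_eq_bloch D hx₂
  have h := norm_offDiag_sq_eq_bloch D hx
  rw [hw] at h
  have hτ : ((star D * D).trace / 2).re
      = a * ((star D * D).trace / 2).re + b * ((star D * D).trace / 2).re := by
    rw [← add_mul, hab, one_mul]
  refine (pow_le_pow_iff_left₀ (by positivity) (norm_nonneg _) two_ne_zero).mp ?_
  nlinarith [mul_add_mul_sq_le ha hb hab ‖offDiag D x₁‖ ‖offDiag D x₂‖]

lemma exists_circleCenter_eq_smul_add_smul {x₁ x₂ : Fin 2 → ℂ} (hx₁ : star x₁ ⬝ᵥ x₁ = 1)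
    (hx₂ : star x₂ ⬝ᵥ x₂ = 1) {a b : ℝ} (ha : 0 ≤ a) (hb : 0 ≤ b) (hab : a + b = 1) :
    ∃ x, star x ⬝ᵥ x = 1 ∧
      circleCenter l D x = a • circleCenter l D x₁ + b • circleCenter l D x₂ ∧
      a * circleRadius s D x₁ + b * circleRadius s D x₂ ≤ circleRadius s D x := by
  have hunit : ∀ x : Fin 2 → ℂ, star x ⬝ᵥ x = 1 → blochVec x ⬝ᵥ blochVec x = 1 := fun x hx => by
    have h := blochVec_dotProduct_self x
    rw [hx, one_pow] at h
    exact_mod_cast h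
  have hpm : (a • blochVec x₁ + b • blochVec x₂) ⬝ᵥ (a • blochVec x₁ + b • blochVec x₂) ≤ 1 := by
    have := dotProduct_self_smul_add_smul_le ha hb hab (blochVec x₁) (blochVec x₂)
    rw [hunit x₁ hx₁, hunit x₂ hx₂] at this
    linarith
  obtain ⟨p, hp, hLp, hφp⟩ := exists_dotProduct_self_eq_one_map_eq hpm (blochMap D)
    (Complex.reLm.comp (blochMap (star D * D)))
  obtain ⟨x, hx, rfl⟩ := exists_blochVec_eq hp
  simp only [LinearMap.comp_apply, map_add, map_smul, Complex.reLm_coe, smul_eq_mul] at hφp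
  refine ⟨x, hx, ?_, ?_⟩
  · rw [circleCenter_eq_bloch l D hx, circleCenter_eq_bloch l D hx₁, circleCenter_eq_bloch l D hx₂,
      hLp, map_add, map_smul, map_smul]
    simp only [Complex.real_smul]
    ring
  · have := mul_norm_offDiag_add_mul_norm_offDiag_le D hx₁ hx₂ hx ha hb hab hLp hφp
    simp only [circleRadius]
    nlinarith [norm_nonneg s]

lemma convex_CNR_triangular : Convex ℝ (CNR !![l, s; 0, -l] D) := by
  rw [convex_iff_forall_pos]
  intro z₁ h₁ z₂ h₂ a b ha hb hab
  obtain ⟨x₁, hx₁, hz₁⟩ := (mem_CNR_triangular_iff l s D).mp h₁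
  obtain ⟨x₂, hx₂, hz₂⟩ := (mem_CNR_triangular_iff l s D).mp h₂
  obtain ⟨x, hx, hcen, hrad⟩ :=
    exists_circleCenter_eq_smul_add_smul l s D hx₁ hx₂ ha.le hb.le hab
  refine mem_CNR_triangular_of_norm_sub_le l s D hx ?_
  calc ‖a • z₁ + b • z₂ - circleCenter l D x‖
      = ‖a • (z₁ - circleCenter l D x₁) + b • (z₂ - circleCenter l D x₂)‖ := by
        rw [hcen, smul_sub, smul_sub]; congr 1; abel
    _ ≤ a * ‖z₁ - circleCenter l D x₁‖ + b * ‖z₂ - circleCenter l D x₂‖ := by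
        refine (norm_add_le _ _).trans ?_
        rw [norm_smul, norm_smul, Real.norm_of_nonneg ha.le, Real.norm_of_nonneg hb.le]
    _ ≤ circleRadius s D x := by rw [hz₁, hz₂]; exact hrad

end Triangular

lemma exists_unitary_star_mul_mul_eq_triangular {C : Matrix (Fin 2) (Fin 2) ℂ}
    (hC : C.trace = 0) :
    ∃ Q ∈ unitaryGroup (Fin 2) ℂ, ∃ l s : ℂ, star Q * C * Q = !![l, s; 0, -l] := by
  obtain ⟨u, μ, hu, hCu⟩ := exists_unit_eigenvector C
  have hQ := transpose_of_pair_mem_unitaryGroup hu (by rw [star_perp_dotProduct_perp, hu])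
    (star_dotProduct_perp u)
  set Q := (of ![u, perp u])ᵀ
  have h₁₀ : (star Q * C * Q) 1 0 = 0 := by
    rw [← star_dotProduct_mulVec_eq_conj_apply]
    show star (perp u) ⬝ᵥ C *ᵥ u = 0
    rw [hCu, dotProduct_smul, star_perp_dotProduct, smul_zero]
  have htr := trace_star_mul_mul_of_mem_unitaryGroup hQ C
  rw [hC, trace_fin_two] at htr
  refine ⟨Q, hQ, (star Q * C * Q) 0 0, (star Q * C * Q) 0 1, ?_⟩
  conv_lhs => rw [eta_fin_two (star Q * C * Q)]
  rw [h₁₀, eq_neg_of_add_eq_zero_right htr]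

lemma convex_CNR_of_trace_eq_zero {C : Matrix (Fin 2) (Fin 2) ℂ} (hC : C.trace = 0)
    (D : Matrix (Fin 2) (Fin 2) ℂ) : Convex ℝ (CNR C D) := by
  obtain ⟨Q, hQ, l, s, hT⟩ := exists_unitary_star_mul_mul_eq_triangular hC
  rw [← CNR_star_mul_mul hQ, hT]
  exact convex_CNR_triangular l s D

lemma CNR_neg_of_trace_eq_zero {C : Matrix (Fin 2) (Fin 2) ℂ} (hC : C.trace = 0)
    (D : Matrix (Fin 2) (Fin 2) ℂ) : CNR (-C) D = CNR C D := by
  obtain ⟨S, hS, hSC⟩ := exists_unitary_star_mul_mul_eq_neg hC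
  rw [← hSC, CNR_star_mul_mul hS]

section Embedding

lemma trace_eq_trace_submatrix_castSucc_add {n : ℕ} (M : Matrix (Fin (n + 1)) (Fin (n + 1)) ℂ) :
    M.trace = (M.submatrix Fin.castSucc Fin.castSucc).trace + M (Fin.last n) (Fin.last n) := by
  simp [trace, Fin.sum_univ_castSucc]

lemma embed_three (A : Matrix (Fin 2) (Fin 2) ℂ) :
    embed 3 A = !![A 0 0, A 0 1, 0; A 1 0, A 1 1, 0; 0, 0, 0] := by
  ext i j; fin_cases i <;> fin_cases j <;> rfl

def extendByOne (V : Matrix (Fin 2) (Fin 2) ℂ) : Matrix (Fin 3) (Fin 3) ℂ :=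
  !![V 0 0, V 0 1, 0; V 1 0, V 1 1, 0; 0, 0, 1]

lemma star_extendByOne (V : Matrix (Fin 2) (Fin 2) ℂ) :
    star (extendByOne V) = extendByOne (star V) := by
  ext i j; fin_cases i <;> fin_cases j <;> simp [extendByOne, star_apply]

lemma extendByOne_mul (V W : Matrix (Fin 2) (Fin 2) ℂ) :
    extendByOne V * extendByOne W = extendByOne (V * W) := by
  ext i j; fin_cases i <;> fin_cases j <;>
    simp [extendByOne, Matrix.mul_apply, Fin.sum_univ_three, Fin.sum_univ_two, -cons_mul]

lemma extendByOne_mem_unitaryGroup {V : Matrix (Fin 2) (Fin 2) ℂ}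
    (hV : V ∈ unitaryGroup (Fin 2) ℂ) : extendByOne V ∈ unitaryGroup (Fin 3) ℂ := by
  rw [mem_unitaryGroup_iff', star_extendByOne, extendByOne_mul, mem_unitaryGroup_iff'.mp hV]
  ext i j; fin_cases i <;> fin_cases j <;> simp [extendByOne]

lemma submatrix_embed_three (A : Matrix (Fin 2) (Fin 2) ℂ) :
    (embed 3 A).submatrix Fin.castSucc Fin.castSucc = A := by
  ext i j; fin_cases i <;> fin_cases j <;> rfl

lemma trace_embed_three (A : Matrix (Fin 2) (Fin 2) ℂ) : (embed 3 A).trace = A.trace := by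
  simp [embed_three, trace_fin_three, trace_fin_two]

lemma trace_embed_three_mul (A : Matrix (Fin 2) (Fin 2) ℂ) (M : Matrix (Fin 3) (Fin 3) ℂ) :
    (embed 3 A * M).trace = (A * M.submatrix Fin.castSucc Fin.castSucc).trace := by
  simp [embed_three, trace_fin_three, trace_fin_two, Matrix.mul_apply, Fin.sum_univ_three,
    -cons_mul]

lemma submatrix_conj_extendByOne (V : Matrix (Fin 2) (Fin 2) ℂ) (M : Matrix (Fin 3) (Fin 3) ℂ) :
    (star (extendByOne V) * M * extendByOne V).submatrix Fin.castSucc Fin.castSucc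
      = star V * M.submatrix Fin.castSucc Fin.castSucc * V := by
  rw [star_extendByOne]
  ext i j; fin_cases i <;> fin_cases j <;>
    simp [extendByOne, Matrix.mul_apply, Fin.sum_univ_three, Fin.sum_univ_two, -cons_mul]

lemma conj_extendByOne_apply_two_two (V : Matrix (Fin 2) (Fin 2) ℂ) (M : Matrix (Fin 3) (Fin 3) ℂ) :
    (star (extendByOne V) * M * extendByOne V) 2 2 = M 2 2 := by
  rw [star_extendByOne]
  simp [extendByOne, Matrix.mul_apply, Fin.sum_univ_three, -cons_mul]

end Embedding

lemma CNR_subset_CNR_embed_three (C D : Matrix (Fin 2) (Fin 2) ℂ) :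
    CNR C D ⊆ CNR (embed 3 C) (embed 3 D) := by
  intro z hz
  obtain ⟨V, hV, rfl⟩ := mem_CNR_iff.mp hz
  refine mem_CNR_iff.mpr ⟨extendByOne V, extendByOne_mem_unitaryGroup hV, ?_⟩
  rw [trace_embed_three_mul, submatrix_conj_extendByOne, submatrix_embed_three]

section Compression

variable {A A₀ B : Matrix (Fin 2) (Fin 2) ℂ} {c : ℂ}

lemma trace_mul_submatrix_sub_mem_CNR (hA : A = A₀ + c • 1)
    (h : CNR (embed 3 A) (embed 3 B) = CNR A B) {U : Matrix (Fin 3) (Fin 3) ℂ}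
    (hU : U ∈ unitaryGroup (Fin 3) ℂ) :
    (A₀ * (star U * embed 3 B * U).submatrix Fin.castSucc Fin.castSucc).trace
      - c * (star U * embed 3 B * U) 2 2 ∈ CNR A₀ B := by
  have hmem : (embed 3 A * (star U * embed 3 B * U)).trace ∈ CNR A B := by
    rw [← h]; exact mem_CNR_iff.mpr ⟨U, hU, rfl⟩
  have htr := trace_eq_trace_submatrix_castSucc_add (star U * embed 3 B * U)
  rw [trace_star_mul_mul_of_mem_unitaryGroup hU, trace_embed_three] at htr
  change B.trace = _ + (star U * embed 3 B * U) 2 2 at htr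
  rw [hA, mem_CNR_add_smul_one_iff, trace_embed_three_mul, Matrix.add_mul, trace_add,
    Matrix.smul_mul, Matrix.one_mul, trace_smul, smul_eq_mul] at hmem
  convert hmem using 1
  rw [htr]
  ring

lemma trace_mul_submatrix_add_mem_CNR (hA : A = A₀ + c • 1)
    (h : CNR (embed 3 A) (embed 3 B) = CNR A B) (hA₀ : A₀.trace = 0) {U : Matrix (Fin 3) (Fin 3) ℂ}
    (hU : U ∈ unitaryGroup (Fin 3) ℂ) :
    (A₀ * (star U * embed 3 B * U).submatrix Fin.castSucc Fin.castSucc).trace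
      + c * (star U * embed 3 B * U) 2 2 ∈ CNR A₀ B := by
  obtain ⟨S, hS, hSA₀⟩ := exists_unitary_star_mul_mul_eq_neg hA₀
  set M := star U * embed 3 B * U
  set X := M.submatrix Fin.castSucc Fin.castSucc
  have h' := trace_mul_submatrix_sub_mem_CNR hA h
    (Submonoid.mul_mem _ hU (extendByOne_mem_unitaryGroup (Unitary.star_mem hS)))
  have hM : star (U * extendByOne (star S)) * embed 3 B * (U * extendByOne (star S))
      = star (extendByOne (star S)) * M * extendByOne (star S) := by
    simp only [star_mul, M, Matrix.mul_assoc]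
  have hX : (A₀ * (S * X * star S)).trace = -(A₀ * X).trace := by
    calc (A₀ * (S * X * star S)).trace = (star S * (A₀ * S * X)).trace := by
          rw [trace_mul_comm (star S)]; simp only [Matrix.mul_assoc]
      _ = -(A₀ * X).trace := by
          rw [← Matrix.mul_assoc, ← Matrix.mul_assoc, hSA₀, Matrix.neg_mul, trace_neg]
  rw [hM, submatrix_conj_extendByOne, conj_extendByOne_apply_two_two, star_star, hX,
    ← CNR_neg_of_trace_eq_zero hA₀, CNR_neg] at h'
  simpa [add_comm] using h'

end Compression

theorem stmt9 (A B : Matrix (Fin 2) (Fin 2) ℂ)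
    (h : CNR (embed 3 A) (embed 3 B) = CNR A B) :
    CNR B (A - (A.trace / 2) • (1 : Matrix (Fin 2) (Fin 2) ℂ)) =
      CNR (embed 3 B) (embed 3 (A - (A.trace / 2) • (1 : Matrix (Fin 2) (Fin 2) ℂ))) := by
  set A₀ := A - (A.trace / 2) • (1 : Matrix (Fin 2) (Fin 2) ℂ)
  have hA : A = A₀ + (A.trace / 2) • 1 := (sub_add_cancel _ _).symm
  have hA₀ : A₀.trace = 0 := by simp [A₀, trace_sub, trace_smul]
  rw [CNR_comm B, CNR_comm (embed 3 B)]
  refine (CNR_subset_CNR_embed_three A₀ B).antisymm fun z hz => ?_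
  obtain ⟨U, hU, rfl⟩ := mem_CNR_iff.mp hz
  have hmid := convex_CNR_of_trace_eq_zero hA₀ B (trace_mul_submatrix_sub_mem_CNR hA h hU)
    (trace_mul_submatrix_add_mem_CNR hA h hA₀ hU) (by norm_num : (0 : ℝ) ≤ 1 / 2)
    (by norm_num : (0 : ℝ) ≤ 1 / 2) (by norm_num)
  rw [trace_embed_three_mul]
  convert hmid using 1
  simp only [Complex.real_smul]
  push_cast
  ring
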